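/- arXiv:1402.6127 — 3 statements merged into one kernel-verified Lean document; each statement's English description precedes it below -/
import Mathlib

section
/- Let G : ℂ → ℂ be analytic in the strip {z : a < Im z < b} and continuous on its closure, bounded on the two boundary lines Im z = a and Im z = b by a constant M, and satisfying |G(z)| ≤ C·exp(ω(|Re z|)) on the strip where ω(p) = o(p). Then |G(z)| ≤ M for all z in the closed strip. -/
open Set Filter Topology Complex Asymptotics

/-! The growth allowance `exp (ω |Re z|)` with `ω = o(p)` is eventually dominated by
`exp (exp (c |Re z|))` for every `c > 0`, in particular for some `c < π / (b - a)`, which is the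
growth Mathlib's Phragmén–Lindelöf principle for a strip of width `b - a` tolerates. -/

lemma eventually_le_exp_mul_of_tendsto_div_zero {ω : ℝ → ℝ}
    (hω : Tendsto (fun p => ω p / p) atTop (𝓝 0)) {c : ℝ} (hc : 0 < c) :
    ∀ᶠ p in atTop, ω p ≤ Real.exp (c * p) := by
  filter_upwards [hω.eventually (gt_mem_nhds hc), eventually_gt_atTop 0] with p hp hp0
  calc ω p ≤ c * p := ((div_lt_iff₀ hp0).1 hp).le
    _ ≤ c * p + 1 := le_add_of_nonneg_right zero_le_one
    _ ≤ Real.exp (c * p) := Real.add_one_le_exp _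

lemma isBigO_exp_exp_of_norm_le_exp {E : Type*} [NormedAddCommGroup E] {f : ℂ → E}
    {s : Set ℂ} {C : ℝ} {ω : ℝ → ℝ} (hf : ∀ z ∈ s, ‖f z‖ ≤ C * Real.exp (ω |z.re|))
    (hω : Tendsto (fun p => ω p / p) atTop (𝓝 0)) {c : ℝ} (hc : 0 < c) :
    f =O[comap (_root_.abs ∘ re) atTop ⊓ 𝓟 s] fun z => Real.exp (Real.exp (c * |z.re|)) := by
  have hω_le : ∀ᶠ z in comap (_root_.abs ∘ re) atTop, ω |z.re| ≤ Real.exp (c * |z.re|) :=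
    tendsto_comap.eventually (eventually_le_exp_mul_of_tendsto_div_zero hω hc)
  refine IsBigO.of_bound (max C 0) ?_
  filter_upwards [hω_le.filter_mono inf_le_left, mem_inf_of_right (mem_principal_self s)]
    with z hz hzs
  calc ‖f z‖ ≤ C * Real.exp (ω |z.re|) := hf z hzs
    _ ≤ max C 0 * Real.exp (Real.exp (c * |z.re|)) := by gcongr; exact le_max_left C 0
    _ = max C 0 * ‖Real.exp (Real.exp (c * |z.re|))‖ := by
      rw [Real.norm_of_nonneg (Real.exp_nonneg _)]

/-- Phragmén–Lindelöf maximum principle on a horizontal strip with subexponential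
growth allowance exp(ω(|Re z|)), ω(p) = o(p). -/
theorem stmt_11 (a b M C : ℝ) (hab : a < b) (G : ℂ → ℂ) (ω : ℝ → ℝ)
    (hanal : DifferentiableOn ℂ G {z | a < z.im ∧ z.im < b})
    (hcont : ContinuousOn G {z | a ≤ z.im ∧ z.im ≤ b})
    (hbdry : ∀ x : ℝ, ‖G (x + a * Complex.I)‖ ≤ M ∧
      ‖G (x + b * Complex.I)‖ ≤ M)
    (hgrow : ∀ z : ℂ, a ≤ z.im → z.im ≤ b → ‖G z‖ ≤ C * Real.exp (ω |z.re|))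
    (hω : Tendsto (fun p => ω p / p) atTop (𝓝 0)) :
    ∀ z : ℂ, a ≤ z.im → z.im ≤ b → ‖G z‖ ≤ M := by
  intro z hza hzb
  obtain ⟨c, hc₀, hc⟩ := exists_between (div_pos Real.pi_pos (sub_pos.2 hab))
  have hclosure : closure (im ⁻¹' Ioo a b) ⊆ {z | a ≤ z.im ∧ z.im ≤ b} :=
    closure_minimal (preimage_mono Ioo_subset_Icc_self) (isClosed_Icc.preimage continuous_im)
  refine PhragmenLindelof.horizontal_strip ⟨hanal, hcont.mono hclosure⟩
    ⟨c, hc, 1, ?_⟩ (fun w hw => ?_) (fun w hw => ?_) hza hzb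
  · simpa only [one_mul] using isBigO_exp_exp_of_norm_le_exp
      (fun w hw => hgrow w hw.1.le hw.2.le) hω hc₀
  · simpa only [← hw, re_add_im] using (hbdry w.re).1
  · simpa only [← hw, re_add_im] using (hbdry w.re).2
end

section
/- Let S be analytic on the strip {0 < Im ζ < π}, continuous and bounded on the closure, with S(θ)⁻¹ = S(−θ) = conj(S(θ)) = S(θ + iπ) for all real θ. Define S on {−π < Im ζ < 0} by S(ζ) := S(ζ + iπ)⁻¹. Then S extends to a 2πi-periodic meromorphic function on all of ℂ. -/
/-!
Since `S (θ + iπ) = (S θ)⁻¹` on ℝ, the continuation `T (ζ + iπ) = (T ζ)⁻¹` of `S` from the strip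
`0 ≤ Im ζ < π` is consistent with `S` on the line `Im ζ = π`, is `2πi`-periodic, and is meromorphic
everywhere as soon as it is meromorphic on that strip, where only the real line needs an argument.
On ℝ, `S⁻¹ = conj S` forces `‖S‖ ∈ {0, 1}`, so by continuity either `S` vanishes on all of ℝ, and
then on the whole strip (reflect `S` across ℝ by `0` and use the identity theorem), or `S` and
`S (· + iπ)` vanish nowhere on ℝ. In the second case `S` above ℝ and `S (· + iπ)⁻¹` below it are
continuous, agree on ℝ and are holomorphic off ℝ, so they glue to a holomorphic function by
Morera's theorem: rectangle integrals vanish after cutting each rectangle along the real line.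
-/

open Set Topology Complex
open scoped Interval ComplexConjugate Real

namespace Complex

variable {E : Type*} [NormedAddCommGroup E] [NormedSpace ℂ E]

theorem wedgeIntegral_add_wedgeIntegral_eq_add {f : ℂ → E} {z w : ℂ} {y : ℝ}
    (hf : ContinuousOn f (Rectangle z w)) (hy : y ∈ [[z.im, w.im]]) :
    wedgeIntegral z w f + wedgeIntegral w z f =
      (wedgeIntegral z (w.re + y * I) f + wedgeIntegral (w.re + y * I) z f) +
        (wedgeIntegral (z.re + y * I) w f + wedgeIntegral w (z.re + y * I) f) := by
  have hvert : ∀ x ∈ [[z.re, w.re]], ∀ a ∈ [[z.im, w.im]], ∀ b ∈ [[z.im, w.im]],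
      IntervalIntegrable (fun t : ℝ => f (↑x + ↑t * I)) MeasureTheory.volume a b := by
    intro x hx a ha b hb
    refine (hf.comp (by fun_prop) fun t ht => ?_).intervalIntegrable
    exact ⟨by simpa using hx, by simpa using uIcc_subset_uIcc ha hb ht⟩
  have hz := hvert z.re left_mem_uIcc
  have hw := hvert w.re right_mem_uIcc
  simp only [wedgeIntegral, add_re, ofReal_re, mul_re, I_re, mul_zero, ofReal_im, I_im,
    mul_one, sub_self, add_zero, add_im, mul_im, zero_add]
  rw [← intervalIntegral.integral_add_adjacent_intervals (hw _ left_mem_uIcc _ hy)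
      (hw _ hy _ right_mem_uIcc),
    ← intervalIntegral.integral_add_adjacent_intervals (hz _ right_mem_uIcc _ hy)
      (hz _ hy _ left_mem_uIcc),
    intervalIntegral.integral_symm w.re z.re (f := fun x : ℝ => f (x + y * I))]
  simp only [smul_add]
  abel

theorem isConservativeOn_of_differentiableAt_of_im_ne {f : ℂ → E} {U : Set ℂ} {c : ℝ}
    (hf : ContinuousOn f U) (hd : ∀ z ∈ U, z.im ≠ c → DifferentiableAt ℂ f z) :
    IsConservativeOn f U := by
  have off_line : ∀ z w, Rectangle z w ⊆ U → c ∉ Ioo (min z.im w.im) (max z.im w.im) →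
      wedgeIntegral z w f + wedgeIntegral w z f = 0 := by
    intro z w hzw hc
    rw [wedgeIntegral_add_wedgeIntegral_eq]
    refine integral_boundary_rect_eq_zero_of_continuousOn_of_differentiableOn f z w
      (hf.mono hzw) fun p hp => (hd p (hzw ?_) fun h => hc (h ▸ hp.2)).differentiableWithinAt
    exact ⟨Ioo_subset_Icc_self hp.1, Ioo_subset_Icc_self hp.2⟩
  intro z w hzw
  rw [eq_neg_iff_add_eq_zero]
  by_cases hc : c ∈ Ioo (min z.im w.im) (max z.im w.im)
  · have hc' : c ∈ [[z.im, w.im]] := Ioo_subset_Icc_self hc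
    rw [wedgeIntegral_add_wedgeIntegral_eq_add (hf.mono hzw) hc']
    have h₁ : Rectangle z (w.re + c * I) ⊆ U := fun p hp => hzw <| by
      simp only [Rectangle, mem_reProdIm, add_re, ofReal_re, mul_re, I_re, mul_zero, ofReal_im,
        I_im, mul_one, sub_self, add_zero, add_im, mul_im, zero_add] at hp ⊢
      exact ⟨hp.1, uIcc_subset_uIcc_left hc' hp.2⟩
    have h₂ : Rectangle (z.re + c * I) w ⊆ U := fun p hp => hzw <| by
      simp only [Rectangle, mem_reProdIm, add_re, ofReal_re, mul_re, I_re, mul_zero, ofReal_im,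
        I_im, mul_one, sub_self, add_zero, add_im, mul_im, zero_add] at hp ⊢
      exact ⟨hp.1, uIcc_subset_uIcc_right hc' hp.2⟩
    rw [off_line _ _ h₁ ?_, off_line _ _ h₂ ?_, add_zero] <;> simp +contextual [le_of_lt]
  · exact off_line z w hzw hc

theorem differentiableOn_of_differentiableAt_of_im_ne [CompleteSpace E] {f : ℂ → E} {U : Set ℂ}
    {c : ℝ} (hU : IsOpen U) (hf : ContinuousOn f U)
    (hd : ∀ z ∈ U, z.im ≠ c → DifferentiableAt ℂ f z) : DifferentiableOn ℂ f U :=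
  (isConservativeOn_and_continuousOn_iff_isDifferentiableOn hU).1
    ⟨isConservativeOn_of_differentiableAt_of_im_ne hf hd, hf⟩

theorem differentiableOn_ite_le_im [CompleteSpace E] {u v : ℂ → E} {U : Set ℂ} {c : ℝ}
    (hU : IsOpen U) (hu : ContinuousOn u (U ∩ {z | c ≤ z.im}))
    (hv : ContinuousOn v (U ∩ {z | z.im ≤ c})) (huv : ∀ z ∈ U, z.im = c → u z = v z)
    (hud : ∀ z ∈ U, c < z.im → DifferentiableAt ℂ u z)
    (hvd : ∀ z ∈ U, z.im < c → DifferentiableAt ℂ v z) :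
    DifferentiableOn ℂ (fun z => if c ≤ z.im then u z else v z) U := by
  refine differentiableOn_of_differentiableAt_of_im_ne (c := c) hU ?_ fun z hz hc => ?_
  · refine ContinuousOn.if (fun z hz => huv z hz.1 ?_) ?_ ?_
    · exact frontier_le_subset_eq continuous_const continuous_im hz.2 |>.symm
    · rwa [closure_le_eq continuous_const continuous_im]
    · refine hv.mono (inter_subset_inter_right _ ?_)
      simpa only [not_le] using closure_lt_subset_le continuous_im continuous_const
  rcases hc.lt_or_gt with hlt | hgt
  · refine (hvd z hz hlt).congr_of_eventuallyEq ?_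
    filter_upwards [continuous_im.isOpen_preimage _ isOpen_Iio |>.mem_nhds hlt] with p hp
    exact if_neg (not_le.2 hp)
  · refine (hud z hz hgt).congr_of_eventuallyEq ?_
    filter_upwards [continuous_im.isOpen_preimage _ isOpen_Ioi |>.mem_nhds hgt] with p hp
    exact if_pos (le_of_lt hp)

end Complex

theorem Complex.norm_eq_one_of_inv_eq_conj {z : ℂ} (hz : z ≠ 0) (h : z⁻¹ = conj z) : ‖z‖ = 1 := by
  have : (normSq z : ℂ) = 1 := by rw [← mul_conj, ← h, mul_inv_cancel₀ hz]
  rw [← pow_eq_one_iff_of_nonneg (norm_nonneg z) two_ne_zero, ← normSq_eq_norm_sq]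
  exact_mod_cast this

theorem forall_eq_zero_or_forall_ne_zero_of_inv_eq_conj {g : ℝ → ℂ} (hg : Continuous g)
    (h : ∀ t, (g t)⁻¹ = conj (g t)) : (∀ t, g t = 0) ∨ ∀ t, g t ≠ 0 := by
  by_contra! hg₀
  obtain ⟨⟨a, ha⟩, b, hb⟩ := hg₀
  have half_mem : (1 / 2 : ℝ) ∈ [[‖g b‖, ‖g a‖]] := by
    rw [hb, norm_zero, norm_eq_one_of_inv_eq_conj ha (h a)]
    norm_num [mem_uIcc]
  obtain ⟨t, -, ht⟩ := intermediate_value_uIcc hg.norm.continuousOn half_mem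
  have ht₀ : g t ≠ 0 := fun h₀ => by norm_num [h₀] at ht
  norm_num [norm_eq_one_of_inv_eq_conj ht₀ (h t)] at ht

theorem Complex.eqOn_zero_of_forall_ofReal_eq_zero {f : ℂ → ℂ} {b : ℝ} (hb : 0 < b)
    (hd : DifferentiableOn ℂ f (im ⁻¹' Ioo 0 b)) (hc : ContinuousOn f (im ⁻¹' Ico 0 b))
    (h₀ : ∀ x : ℝ, f x = 0) : EqOn f 0 (im ⁻¹' Ico 0 b) := by
  set V : Set ℂ := im ⁻¹' Ioo (-b) b
  have hV : IsOpen V := isOpen_Ioo.preimage continuous_im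
  have hg : DifferentiableOn ℂ (fun z => if 0 ≤ z.im then f z else 0) V := by
    refine differentiableOn_ite_le_im hV (hc.mono fun z hz => ⟨hz.2, hz.1.2⟩)
      continuousOn_const (fun z _ hz => ?_) (fun z hz hz₀ => ?_)
      fun _ _ _ => differentiableAt_const 0
    · rw [← h₀ z.re]
      exact congrArg f (Complex.ext rfl (by simp [hz]))
    · exact hd.differentiableAt ((isOpen_Ioo.preimage continuous_im).mem_nhds ⟨hz₀, hz.2⟩)
  have hg₀ : EqOn (fun z => if 0 ≤ z.im then f z else 0) 0 V := by
    refine (hg.analyticOnNhd hV).eqOn_zero_of_preconnected_of_eventuallyEq_zero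
      ((convex_Ioo (-b) b).linear_preimage imLm).isPreconnected
      (z₀ := -(b / 2 : ℝ) * I) (by simp [V]; constructor <;> linarith) ?_
    filter_upwards [(isOpen_Iio.preimage continuous_im).mem_nhds
      (show (-(b / 2 : ℝ) * I).im ∈ Iio 0 by simp [hb])] with z hz
    exact if_neg (not_le.2 hz)
  intro z hz
  simpa [if_pos hz.1] using hg₀ (show z ∈ V from ⟨by linarith [hz.1], hz.2⟩)

theorem Complex.abs_im_lt_of_mem_ball_ofReal {x r : ℝ} {ζ : ℂ}
    (hζ : ζ ∈ Metric.ball (x : ℂ) r) : |ζ.im| < r := by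
  simpa using (abs_im_le_norm (ζ - x)).trans_lt (mem_ball_iff_norm.1 hζ)

/-- On the strip `kπ ≤ Im ζ < (k + 1)π` this is `S (ζ - kπi) ^ (-1) ^ k`. -/
noncomputable def scatteringExtension (S : ℂ → ℂ) (ζ : ℂ) : ℂ :=
  if Even (toIcoDiv Real.pi_pos 0 ζ.im) then S (ζ - toIcoDiv Real.pi_pos 0 ζ.im * π * I)
  else (S (ζ - toIcoDiv Real.pi_pos 0 ζ.im * π * I))⁻¹

namespace scatteringExtension

variable {S : ℂ → ℂ}

theorem add_pi_mul_I (ζ : ℂ) :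
    scatteringExtension S (ζ + π * I) = (scatteringExtension S ζ)⁻¹ := by
  have hk : toIcoDiv Real.pi_pos 0 (ζ + π * I).im = toIcoDiv Real.pi_pos 0 ζ.im + 1 := by
    simp
  have hw : ζ + π * I - ↑(toIcoDiv Real.pi_pos 0 ζ.im + 1 : ℤ) * π * I =
      ζ - toIcoDiv Real.pi_pos 0 ζ.im * π * I := by
    push_cast; ring
  unfold scatteringExtension
  rw [hk, hw]
  simp only [Int.even_add_one]
  split_ifs <;> simp

theorem of_im_mem_Ico {ζ : ℂ} (h : ζ.im ∈ Ico 0 π) : scatteringExtension S ζ = S ζ := by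
  have hk : toIcoDiv Real.pi_pos 0 ζ.im = 0 :=
    toIcoDiv_eq_of_sub_zsmul_mem_Ico Real.pi_pos (by simpa using h)
  simp [scatteringExtension, hk]

theorem of_im_mem_Ico_neg {ζ : ℂ} (h : ζ.im ∈ Ico (-π) 0) :
    scatteringExtension S ζ = (S (ζ + π * I))⁻¹ := by
  rw [← of_im_mem_Ico (S := S) (by simp; constructor <;> linarith [h.1, h.2]), add_pi_mul_I,
    inv_inv]

theorem of_im_eq_pi (htop : ∀ θ : ℝ, S (θ + π * I) = (S θ)⁻¹) {ζ : ℂ} (h : ζ.im = π) :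
    scatteringExtension S ζ = S ζ := by
  have hζ : ζ = ζ.re + π * I := Complex.ext (by simp) (by simp [h])
  rw [hζ, add_pi_mul_I, of_im_mem_Ico (by simp [Real.pi_pos]), htop]

theorem periodic : Function.Periodic (scatteringExtension S) (2 * π * I) := fun ζ => by
  rw [show ζ + 2 * π * I = ζ + π * I + π * I by ring, add_pi_mul_I, add_pi_mul_I, inv_inv]

theorem eq_zero (h : EqOn S 0 (im ⁻¹' Ico 0 π)) : scatteringExtension S = 0 := by
  funext ζ
  have hw : S (ζ - toIcoDiv Real.pi_pos 0 ζ.im * π * I) = 0 := h <| by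
    simpa [zsmul_eq_mul] using sub_toIcoDiv_zsmul_mem_Ico Real.pi_pos 0 ζ.im
  simp [scatteringExtension, hw]

theorem analyticAt_ofReal_of_ne_zero (hanal : DifferentiableOn ℂ S (im ⁻¹' Ioo 0 π))
    (hcont : ContinuousOn S (im ⁻¹' Icc 0 π)) (htop : ∀ θ : ℝ, S (θ + π * I) = (S θ)⁻¹)
    {x : ℝ} (hx : S (x + π * I) ≠ 0) : AnalyticAt ℂ (scatteringExtension S) x := by
  obtain ⟨ε, hε, hne⟩ := Metric.mem_nhdsWithin_iff.1 <|
    hcont _ (by simp [Real.pi_pos.le]) (isOpen_ne.mem_nhds hx)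
  set U := Metric.ball (x : ℂ) (min ε π)
  have him (ζ : ℂ) (hζ : ζ ∈ U) : ζ.im ∈ Ioo (-π) π :=
    abs_lt.1 <| (abs_im_lt_of_mem_ball_ofReal hζ).trans_le (min_le_right ε π)
  have him_add (ζ : ℂ) : (ζ + π * I).im = ζ.im + π := by simp
  have hstrip (ζ : ℂ) (hζ : ζ ∈ U) (hζ₀ : ζ.im ≤ 0) : ζ + π * I ∈ im ⁻¹' Icc 0 π := by
    simp only [mem_preimage, him_add, mem_Icc]
    constructor <;> linarith [(him ζ hζ).1]
  have hshift (ζ : ℂ) (hζ : ζ ∈ U) (hζ₀ : ζ.im ≤ 0) : S (ζ + π * I) ≠ 0 := by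
    refine hne ⟨?_, hstrip ζ hζ hζ₀⟩
    rw [Metric.mem_ball, dist_add_right]
    exact (Metric.mem_ball.1 hζ).trans_le (min_le_left ε π)
  have hg : DifferentiableOn ℂ (fun ζ => if 0 ≤ ζ.im then S ζ else (S (ζ + π * I))⁻¹) U := by
    refine differentiableOn_ite_le_im Metric.isOpen_ball
      (hcont.mono fun ζ hζ => ⟨hζ.2, (him ζ hζ.1).2.le⟩)
      ((hcont.comp (by fun_prop) fun ζ hζ => hstrip ζ hζ.1 hζ.2).inv₀
        fun ζ hζ => hshift ζ hζ.1 hζ.2) (fun ζ _ hζ₀ => ?_)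
      (fun ζ hζ hζ₀ => hanal.differentiableAt ((isOpen_Ioo.preimage continuous_im).mem_nhds ⟨hζ₀, (him ζ hζ).2⟩))
      fun ζ hζ hζ₀ => ?_
    · rw [show ζ = ζ.re from Complex.ext (by simp) (by simp [hζ₀]), htop, inv_inv]
    · refine ((hanal.differentiableAt ((isOpen_Ioo.preimage continuous_im).mem_nhds ?_)).comp ζ (by fun_prop)).inv
        (hshift ζ hζ hζ₀.le)
      simp only [mem_preimage, him_add, mem_Ioo]
      constructor <;> linarith [(him ζ hζ).1]
  have hU : U ∈ 𝓝 (x : ℂ) := Metric.ball_mem_nhds _ (lt_min hε Real.pi_pos)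
  refine (hg.analyticAt hU).congr ?_
  filter_upwards [hU] with ζ hζ
  split_ifs with hζ₀
  · exact (of_im_mem_Ico ⟨hζ₀, (him ζ hζ).2⟩).symm
  · exact (of_im_mem_Ico_neg ⟨(him ζ hζ).1.le, not_le.1 hζ₀⟩).symm

theorem analyticAt_of_im_mem_Ico (hanal : DifferentiableOn ℂ S (im ⁻¹' Ioo 0 π))
    (hcont : ContinuousOn S (im ⁻¹' Icc 0 π)) (hconj : ∀ θ : ℝ, (S θ)⁻¹ = conj (S θ))
    (htop : ∀ θ : ℝ, S (θ + π * I) = (S θ)⁻¹) {z : ℂ} (hz : z.im ∈ Ico 0 π) :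
    AnalyticAt ℂ (scatteringExtension S) z := by
  rcases hz.1.eq_or_lt with hz₀ | hz₀
  · have hz : z = z.re := Complex.ext (by simp) (by simp [← hz₀])
    have hreal : Continuous fun θ : ℝ => S θ :=
      hcont.comp_continuous continuous_ofReal fun θ => by simp [Real.pi_pos.le]
    rw [hz]
    rcases forall_eq_zero_or_forall_ne_zero_of_inv_eq_conj hreal hconj with h₀ | h₀
    · rw [eq_zero (Complex.eqOn_zero_of_forall_ofReal_eq_zero Real.pi_pos
        hanal (hcont.mono fun ζ hζ => Ico_subset_Icc_self hζ) h₀)]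
      exact analyticAt_const
    · exact analyticAt_ofReal_of_ne_zero hanal hcont htop (by rw [htop]; exact inv_ne_zero (h₀ _))
  · have hU : im ⁻¹' Ioo 0 π ∈ 𝓝 z := (isOpen_Ioo.preimage continuous_im).mem_nhds ⟨hz₀, hz.2⟩
    refine (hanal.analyticAt hU).congr ?_
    filter_upwards [hU] with ζ hζ using (of_im_mem_Ico (Ioo_subset_Ico_self hζ)).symm

theorem meromorphicAt_add_pi_mul_I_iff {z : ℂ} :
    MeromorphicAt (scatteringExtension S) (z + π * I) ↔ MeromorphicAt (scatteringExtension S) z := by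
  have h : scatteringExtension S = (scatteringExtension S ∘ (· - π * I))⁻¹ := by
    funext ζ
    simp [← add_pi_mul_I]
  conv_lhs => rw [h]
  rw [MeromorphicAt.inv_iff, meromorphicAt_comp_sub_const_iff_meromorphicAt, add_sub_cancel_right]

theorem meromorphicAt_add_int_mul_pi_mul_I_iff {z : ℂ} (k : ℤ) :
    MeromorphicAt (scatteringExtension S) (z + k * π * I) ↔
      MeromorphicAt (scatteringExtension S) z := by
  induction k using Int.induction_on with
  | zero => simp
  | succ k ih =>
    rw [show z + ((k + 1 : ℤ) : ℂ) * π * I = z + ((k : ℤ) : ℂ) * π * I + π * I by push_cast; ring,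
      meromorphicAt_add_pi_mul_I_iff, ih]
  | pred k ih =>
    rw [← ih, show z + ((-k : ℤ) : ℂ) * π * I = z + ((-k - 1 : ℤ) : ℂ) * π * I + π * I by
      push_cast; ring, meromorphicAt_add_pi_mul_I_iff]

theorem meromorphic (hanal : DifferentiableOn ℂ S (im ⁻¹' Ioo 0 π))
    (hcont : ContinuousOn S (im ⁻¹' Icc 0 π)) (hconj : ∀ θ : ℝ, (S θ)⁻¹ = conj (S θ))
    (htop : ∀ θ : ℝ, S (θ + π * I) = (S θ)⁻¹) : Meromorphic (scatteringExtension S) := by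
  intro z
  rw [← sub_add_cancel z (toIcoDiv Real.pi_pos 0 z.im * π * I),
    meromorphicAt_add_int_mul_pi_mul_I_iff]
  refine (analyticAt_of_im_mem_Ico hanal hcont hconj htop ?_).meromorphicAt
  simpa [zsmul_eq_mul] using sub_toIcoDiv_zsmul_mem_Ico Real.pi_pos 0 z.im

end scatteringExtension

theorem stmt_14_general (S : ℂ → ℂ)
    (hanal : DifferentiableOn ℂ S {ζ | 0 < ζ.im ∧ ζ.im < Real.pi})
    (hcont : ContinuousOn S {ζ | 0 ≤ ζ.im ∧ ζ.im ≤ Real.pi})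
    (hrel : ∀ θ : ℝ, (S θ)⁻¹ = S (-θ) ∧ S (-θ) = starRingEnd ℂ (S θ) ∧
      starRingEnd ℂ (S θ) = S ((θ : ℂ) + Real.pi * Complex.I)) :
    ∃ T : ℂ → ℂ,
      (∀ ζ : ℂ, 0 ≤ ζ.im → ζ.im ≤ Real.pi → T ζ = S ζ) ∧
      (∀ ζ : ℂ, -Real.pi < ζ.im → ζ.im < 0 → T ζ = (S (ζ + Real.pi * Complex.I))⁻¹) ∧
      (∀ ζ : ℂ, T (ζ + 2 * Real.pi * Complex.I) = T ζ) ∧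
      MeromorphicOn T Set.univ := by
  have hconj (θ : ℝ) : (S θ)⁻¹ = conj (S θ) := (hrel θ).1.trans (hrel θ).2.1
  have htop (θ : ℝ) : S (θ + π * I) = (S θ)⁻¹ :=
    ((hrel θ).1.trans ((hrel θ).2.1.trans (hrel θ).2.2)).symm
  refine ⟨scatteringExtension S, fun ζ h₀ hπ => ?_,
    fun ζ hπ h₀ => scatteringExtension.of_im_mem_Ico_neg ⟨hπ.le, h₀⟩,
    scatteringExtension.periodic,
    (scatteringExtension.meromorphic hanal hcont hconj htop).meromorphicOn⟩
  rcases hπ.lt_or_eq with hπ | hπ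
  · exact scatteringExtension.of_im_mem_Ico ⟨h₀, hπ⟩
  · exact scatteringExtension.of_im_eq_pi htop hπ

/-- A scattering function S extends, via S(ζ) := S(ζ+iπ)⁻¹ on the lower strip, to a
2πi-periodic meromorphic function on all of ℂ. -/
theorem stmt_14 (S : ℂ → ℂ)
    (hanal : DifferentiableOn ℂ S {ζ | 0 < ζ.im ∧ ζ.im < Real.pi})
    (hcont : ContinuousOn S {ζ | 0 ≤ ζ.im ∧ ζ.im ≤ Real.pi})
    (hbdd : ∃ M, ∀ ζ ∈ {ζ : ℂ | 0 ≤ ζ.im ∧ ζ.im ≤ Real.pi}, ‖S ζ‖ ≤ M)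
    (hrel : ∀ θ : ℝ, (S θ)⁻¹ = S (-θ) ∧ S (-θ) = starRingEnd ℂ (S θ) ∧
      starRingEnd ℂ (S θ) = S ((θ : ℂ) + Real.pi * Complex.I)) :
    ∃ T : ℂ → ℂ,
      (∀ ζ : ℂ, 0 ≤ ζ.im → ζ.im ≤ Real.pi → T ζ = S ζ) ∧
      (∀ ζ : ℂ, -Real.pi < ζ.im → ζ.im < 0 → T ζ = (S (ζ + Real.pi * Complex.I))⁻¹) ∧
      (∀ ζ : ℂ, T (ζ + 2 * Real.pi * Complex.I) = T ζ) ∧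
      MeromorphicOn T Set.univ :=
  stmt_14_general S hanal hcont hrel
end

section
/- Let K : S(0,π) → ℂ be analytic satisfying |K(ξ+iλ)| ≤ c·e^{c'ω(cosh ξ)}/(λ(π−λ))^{m/2} for 0 < λ < π, where ω is monotone. Fix ℓ > m/2 and define K^{(−ℓ)} as the ℓ-th iterated antiderivative of K along horizontal directions with K^{(−j)}(iπ/2) = 0 for j = 1,…,ℓ. Then there is c'' > 0 with |K^{(−ℓ)}(ξ+iλ)| ≤ c''·(1+|ξ|)^ℓ·e^{c'ω(cosh ξ)} for all 0 < λ < π. -/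
open Set Filter Real
open Complex (I)

/-!
Write `w(λ) = λ(π - λ)`. If `G = F'` on the strip is bounded by `P(ξ) / w(λ)^s` with `s ≠ 1`,
integrating `G` vertically from height `π/2` costs `∫_λ^{π/2} μ^{-s} dμ = O(λ^{-max(s-1,0)})`,
and integrating it horizontally along `Im ζ = π/2` from `iπ/2`, where `F` vanishes, costs a
factor `|ξ|`. So `F` is bounded by `C (1 + |ξ|) P(ξ) / w(λ)^{max(s-1,0)}`: each antiderivative
lowers the exponent of the boundary blow-up by one, at the price of one factor `1 + |ξ|`.
Starting from the exponent `m/2 + 1/4 > m/2`, after `ℓ > m/2` steps the exponent is `0`.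
-/

lemma mul_pi_sub_le (x : ℝ) : x * (π - x) ≤ π ^ 2 / 4 := by
  nlinarith [sq_nonneg (x - π / 2)]

lemma integral_rpow_neg_le {s t b : ℝ} (hs0 : 0 ≤ s) (hs1 : s ≠ 1) (hb : 1 ≤ b) (ht : 0 < t)
    (htb : t ≤ b) : ∫ μ in t..b, μ ^ (-s) ≤ b / |1 - s| * t ^ (-max (s - 1) 0) := by
  have h0 : (0 : ℝ) ∉ uIcc t b := by rw [uIcc_of_le htb]; exact fun h => ht.not_ge h.1
  rw [integral_rpow (Or.inr ⟨by contrapose! hs1; linarith, h0⟩), show -s + 1 = 1 - s by ring]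
  have hT : 0 < t ^ (1 - s) := by positivity
  have hB : 0 < b ^ (1 - s) := by positivity
  rcases hs1.lt_or_gt with hs | hs
  · rw [max_eq_right (by linarith), neg_zero, rpow_zero, mul_one, abs_of_pos (by linarith)]
    have : b ^ (1 - s) ≤ b := rpow_le_self_of_one_le hb (by linarith)
    gcongr
    linarith
  · rw [max_eq_left (by linarith), abs_of_neg (by linarith), show -(s - 1) = 1 - s by ring,
      div_le_iff_of_neg (by linarith), div_mul_eq_mul_div, div_mul_eq_mul_div,
      neg_sub, div_le_iff₀ (by linarith)]
    nlinarith [mul_pos hB (sub_pos.2 hs),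
      mul_nonneg (mul_nonneg (sub_nonneg.2 hb) hT.le) (sub_pos.2 hs).le]

lemma norm_sub_le_of_norm_deriv_le_rpow_of_le_pi_div_two {g f : ℝ → ℂ} {s A lam : ℝ} (hs0 : 0 ≤ s)
    (hs1 : s ≠ 1) (hlam : 0 < lam) (hlam2 : lam ≤ π / 2)
    (hg : ∀ μ ∈ Icc lam (π / 2), HasDerivAt g (f μ) μ) (hf : ContinuousOn f (Icc lam (π / 2)))
    (hbound : ∀ μ ∈ Icc lam (π / 2), ‖f μ‖ ≤ A / (μ * (π - μ)) ^ s) :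
    ‖g lam - g (π / 2)‖ ≤ (2 / π) ^ s * (π / 2 / |1 - s|) * π ^ max (s - 1) 0 * A /
      (lam * (π - lam)) ^ max (s - 1) 0 := by
  set e := max (s - 1) 0
  have hpi : 0 < π - lam := by linarith [pi_pos]
  have hA : 0 ≤ A := by
    have := (norm_nonneg _).trans (hbound lam ⟨le_rfl, hlam2⟩)
    rwa [le_div_iff₀ (by positivity), zero_mul] at this
  have hf_le : ∀ μ ∈ Icc lam (π / 2), ‖f μ‖ ≤ A * (2 / π) ^ s * μ ^ (-s) := by
    intro μ hμI
    have hμ : 0 < μ := hlam.trans_le hμI.1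
    calc ‖f μ‖ ≤ A / (μ * (π - μ)) ^ s := hbound μ hμI
      _ ≤ A / (μ * (π / 2)) ^ s := by gcongr; linarith [hμI.2]
      _ = A * (2 / π) ^ s * μ ^ (-s) := by
        rw [mul_rpow hμ.le (by positivity), rpow_neg hμ.le, div_rpow zero_le_two pi_pos.le,
          div_rpow pi_pos.le zero_le_two]
        field_simp
  have hint : ‖g (π / 2) - g lam‖ ≤ A * (2 / π) ^ s * ∫ μ in lam..π / 2, μ ^ (-s) := by
    rw [← intervalIntegral.integral_eq_sub_of_hasDerivAt (uIcc_of_le hlam2 ▸ hg)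
      (hf.intervalIntegrable_of_Icc hlam2), ← intervalIntegral.integral_const_mul]
    refine intervalIntegral.norm_integral_le_of_norm_le hlam2
      (Eventually.of_forall fun μ hμ => hf_le μ (Ioc_subset_Icc_self hμ)) ?_
    refine ContinuousOn.intervalIntegrable_of_Icc hlam2 <|
      continuousOn_const.mul <| continuousOn_id.rpow_const fun μ hμ => ?_
    exact Or.inl (hlam.trans_le hμ.1).ne'
  have hlam_le : lam ^ (-e) ≤ π ^ e / (lam * (π - lam)) ^ e := by
    rw [rpow_neg hlam.le, inv_eq_one_div, div_le_div_iff₀ (by positivity) (by positivity),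
      one_mul, mul_comm, ← mul_rpow pi_pos.le hlam.le]
    gcongr
    linarith
  calc ‖g lam - g (π / 2)‖ = ‖g (π / 2) - g lam‖ := norm_sub_rev _ _
    _ ≤ A * (2 / π) ^ s * ∫ μ in lam..π / 2, μ ^ (-s) := hint
    _ ≤ A * (2 / π) ^ s * (π / 2 / |1 - s| * lam ^ (-e)) := by
      gcongr
      exact integral_rpow_neg_le hs0 hs1 (by linarith [pi_gt_three]) hlam hlam2
    _ ≤ A * (2 / π) ^ s * (π / 2 / |1 - s| * (π ^ e / (lam * (π - lam)) ^ e)) := by gcongr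
    _ = _ := by ring

lemma exists_norm_sub_le_of_norm_deriv_le_rpow {s : ℝ} (hs0 : 0 ≤ s) (hs1 : s ≠ 1) :
    ∃ C > 0, ∀ (g f : ℝ → ℂ) (A lam : ℝ), (∀ μ ∈ Ioo 0 π, HasDerivAt g (f μ) μ) →
      ContinuousOn f (Ioo 0 π) → (∀ μ ∈ Ioo 0 π, ‖f μ‖ ≤ A / (μ * (π - μ)) ^ s) →
      lam ∈ Ioo 0 π → ‖g lam - g (π / 2)‖ ≤ C * A / (lam * (π - lam)) ^ max (s - 1) 0 := by
  have habs : 0 < |1 - s| := abs_pos.2 (sub_ne_zero.2 hs1.symm)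
  refine ⟨(2 / π) ^ s * (π / 2 / |1 - s|) * π ^ max (s - 1) 0, by positivity, ?_⟩
  intro g f A lam hg hf hbound ⟨hlam, hlamπ⟩
  have hsub : ∀ {a}, 0 < a → a ≤ π / 2 → Icc a (π / 2) ⊆ Ioo 0 π := fun ha _ μ hμ =>
    ⟨ha.trans_le hμ.1, hμ.2.trans_lt (by linarith [pi_pos])⟩
  rcases le_total lam (π / 2) with hle | hge
  · exact norm_sub_le_of_norm_deriv_le_rpow_of_le_pi_div_two hs0 hs1 hlam hle
      (fun μ hμ => hg μ (hsub hlam hle hμ)) (hf.mono (hsub hlam hle))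
      fun μ hμ => hbound μ (hsub hlam hle hμ)
  · -- reflect `μ ↦ π - μ`, which preserves the weight `μ * (π - μ)`
    have hlam' : 0 < π - lam := by linarith
    have hle' : π - lam ≤ π / 2 := by linarith
    have hmem : ∀ μ ∈ Icc (π - lam) (π / 2), π - μ ∈ Ioo 0 π := fun μ hμ => by
      have := hsub hlam' hle' hμ; constructor <;> linarith [this.1, this.2]
    have := norm_sub_le_of_norm_deriv_le_rpow_of_le_pi_div_two (g := fun μ => g (π - μ))
      (f := fun μ => -f (π - μ)) (A := A) hs0 hs1 hlam' hle'
      (fun μ hμ => (hg _ (hmem μ hμ)).comp_const_sub π μ)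
      ((hf.comp (continuousOn_const.sub continuousOn_id) fun μ hμ => hmem μ hμ).neg)
      fun μ hμ => by
        rw [norm_neg, show μ * (π - μ) = (π - μ) * (π - (π - μ)) by ring]
        exact hbound _ (hmem μ hμ)
    simpa only [sub_sub_cancel, show π - π / 2 = π / 2 by ring, mul_comm (π - lam) lam]
      using this

def StripBound (F : ℂ → ℂ) (P : ℝ → ℝ) (s : ℝ) : Prop :=
  ∀ ξ lam : ℝ, 0 < lam → lam < π → ‖F (ξ + lam * I)‖ ≤ P ξ / (lam * (π - lam)) ^ s

lemma StripBound.mono_exponent {F : ℂ → ℂ} {P : ℝ → ℝ} {s s' : ℝ} (h : StripBound F P s)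
    (hP : ∀ ξ, 0 ≤ P ξ) (hs : s ≤ s') :
    StripBound F (fun ξ => (π ^ 2 / 4) ^ (s' - s) * P ξ) s' := by
  intro ξ lam h0 hπ
  have hw : 0 < lam * (π - lam) := mul_pos h0 (by linarith)
  calc ‖F (ξ + lam * I)‖ ≤ P ξ / (lam * (π - lam)) ^ s := h ξ lam h0 hπ
    _ = (lam * (π - lam)) ^ (s' - s) * P ξ / (lam * (π - lam)) ^ s' := by
      rw [rpow_sub hw]; field_simp
    _ ≤ (π ^ 2 / 4) ^ (s' - s) * P ξ / (lam * (π - lam)) ^ s' := by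
      gcongr
      · exact hP ξ
      · exact mul_pi_sub_le lam

lemma HasDerivAt.comp_ofReal_add {F : ℂ → ℂ} {w z : ℂ} {t : ℝ} (h : HasDerivAt F w (t + z)) :
    HasDerivAt (fun t : ℝ => F (t + z)) w t :=
  (h.comp_add_const _ z).comp_ofReal

lemma HasDerivAt.comp_add_ofReal_mul_I {F : ℂ → ℂ} {w z : ℂ} {μ : ℝ}
    (h : HasDerivAt F w (z + μ * I)) :
    HasDerivAt (fun μ : ℝ => F (z + μ * I)) (w * I) μ := by
  have : HasDerivAt (fun ζ : ℂ => z + ζ * I) I μ := by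
    simpa using ((hasDerivAt_id (μ : ℂ)).mul_const I).const_add z
  exact (h.comp (μ : ℂ) this).comp_ofReal

lemma norm_le_mul_abs_of_hasDerivAt_horizontal {F G : ℂ → ℂ} {B : ℝ → ℝ} {y : ℝ}
    (hFG : ∀ t : ℝ, HasDerivAt F (G (t + y * I)) (t + y * I))
    (hB : ∀ t ξ, |t| ≤ |ξ| → B t ≤ B ξ) (hGB : ∀ t : ℝ, ‖G (t + y * I)‖ ≤ B t)
    (hF0 : F (y * I) = 0) (ξ : ℝ) : ‖F (ξ + y * I)‖ ≤ B ξ * |ξ| := by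
  have := (convex_Icc (-|ξ|) |ξ|).norm_image_sub_le_of_norm_hasDerivWithin_le
    (f := fun t : ℝ => F (t + y * I)) (f' := fun t : ℝ => G (t + y * I))
    (fun t _ => (hFG t).comp_ofReal_add.hasDerivWithinAt)
    (fun t ht => (hGB t).trans (hB t ξ (abs_le.2 ht)))
    (x := 0) (y := ξ) ⟨by simp, by simp⟩ ⟨neg_abs_le ξ, le_abs_self ξ⟩
  simpa only [Complex.ofReal_zero, zero_add, hF0, sub_zero, Real.norm_eq_abs] using this

theorem StripBound.exists_of_hasDerivAt {F G : ℂ → ℂ} {P : ℝ → ℝ} {s : ℝ} (hs0 : 0 ≤ s)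
    (hs1 : s ≠ 1) (hP0 : ∀ ξ, 0 ≤ P ξ) (hPmono : ∀ t ξ, |t| ≤ |ξ| → P t ≤ P ξ)
    (hFG : ∀ ζ : ℂ, 0 < ζ.im → ζ.im < π → HasDerivAt F (G ζ) ζ)
    (hG : ∀ ζ : ℂ, 0 < ζ.im → ζ.im < π → ContinuousAt G ζ)
    (hGP : StripBound G P s) (hF0 : F ((π / 2 : ℝ) * I) = 0) :
    ∃ C > 0, StripBound F (fun ξ => C * ((1 + |ξ|) * P ξ)) (max (s - 1) 0) := by
  obtain ⟨Cv, hCv, hvert⟩ := exists_norm_sub_le_of_norm_deriv_le_rpow hs0 hs1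
  have hπ2 : 0 < π / 2 := by positivity
  have hπ2π : π / 2 < π := by linarith [pi_pos]
  set w₀ := π / 2 * (π - π / 2)
  set e := max (s - 1) 0
  have hw₀ : 0 < w₀ := mul_pos hπ2 (by linarith)
  have hhor : ∀ ξ : ℝ, ‖F (ξ + (π / 2 : ℝ) * I)‖ ≤ P ξ / w₀ ^ s * |ξ| :=
    norm_le_mul_abs_of_hasDerivAt_horizontal
      (fun t => hFG _ (by simpa using hπ2) (by simpa using hπ2π))
      (fun t ξ h => div_le_div_of_nonneg_right (hPmono t ξ h) (by positivity))
      (fun t => hGP t _ hπ2 hπ2π) hF0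
  refine ⟨Cv + w₀ ^ e / w₀ ^ s, by positivity, fun ξ lam h0 hπ => ?_⟩
  have hw : 0 < lam * (π - lam) := mul_pos h0 (by linarith)
  have hw_le : (lam * (π - lam)) ^ e ≤ w₀ ^ e := by
    gcongr
    exact (mul_pi_sub_le lam).trans_eq (by ring)
  have hv := hvert (fun μ : ℝ => F (ξ + μ * I)) (fun μ => G (ξ + μ * I) * I) (P ξ) lam
    (fun μ hμ => (hFG _ (by simpa using hμ.1) (by simpa using hμ.2)).comp_add_ofReal_mul_I)
    (fun μ hμ => ((hG _ (by simpa using hμ.1) (by simpa using hμ.2)).comp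
      (by fun_prop : Continuous fun μ : ℝ => (ξ : ℂ) + μ * I).continuousAt).mul_const
        I |>.continuousWithinAt)
    (fun μ hμ => by rw [norm_mul, Complex.norm_I, mul_one]; exact hGP ξ μ hμ.1 hμ.2) ⟨h0, hπ⟩
  calc ‖F (ξ + lam * I)‖
      ≤ ‖F (ξ + lam * I) - F (ξ + (π / 2 : ℝ) * I)‖ + ‖F (ξ + (π / 2 : ℝ) * I)‖ :=
        norm_le_norm_sub_add _ _
    _ ≤ Cv * P ξ / (lam * (π - lam)) ^ e + P ξ / w₀ ^ s * |ξ| := add_le_add hv (hhor ξ)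
    _ = Cv * (1 * P ξ) / (lam * (π - lam)) ^ e + 1 * |ξ| * P ξ / w₀ ^ s := by ring
    _ ≤ Cv * ((1 + |ξ|) * P ξ) / (lam * (π - lam)) ^ e +
        w₀ ^ e / (lam * (π - lam)) ^ e * (1 + |ξ|) * P ξ / w₀ ^ s := by
      gcongr
      · exact hP0 ξ
      · linarith [abs_nonneg ξ]
      · exact hP0 ξ
      · exact (one_le_div (by positivity)).2 hw_le
      · linarith
    _ = (Cv + w₀ ^ e / w₀ ^ s) * ((1 + |ξ|) * P ξ) / (lam * (π - lam)) ^ e := by ring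

lemma max_sub_one_max_zero (x : ℝ) : max (max x 0 - 1) 0 = max (x - 1) 0 := by
  rw [← max_sub_sub_right, max_assoc]
  norm_num

theorem StripBound.exists_iterate {K : ℕ → ℂ → ℂ} {E : ℝ → ℝ} {ℓ : ℕ} {a : ℝ}
    (ha : ∀ j : ℕ, a - j ≠ 1) (hE0 : ∀ ξ, 0 ≤ E ξ) (hEmono : ∀ t ξ, |t| ≤ |ξ| → E t ≤ E ξ)
    (hderiv : ∀ j < ℓ, ∀ ζ : ℂ, 0 < ζ.im → ζ.im < π → HasDerivAt (K (j + 1)) (K j ζ) ζ)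
    (hcont : ∀ j < ℓ, ∀ ζ : ℂ, 0 < ζ.im → ζ.im < π → ContinuousAt (K j) ζ)
    (hzero : ∀ j, 1 ≤ j → j ≤ ℓ → K j ((π / 2 : ℝ) * I) = 0)
    (hK0 : StripBound (K 0) E (max a 0)) :
    ∀ j ≤ ℓ, ∃ C > 0, StripBound (K j) (fun ξ => C * ((1 + |ξ|) ^ j * E ξ)) (max (a - j) 0) := by
  intro j
  induction j with
  | zero => exact fun _ => ⟨1, one_pos, by simpa using hK0⟩
  | succ j ih =>
    intro hj
    obtain ⟨C, hC, hKj⟩ := ih (by omega)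
    obtain ⟨C', hC', hKj'⟩ := hKj.exists_of_hasDerivAt (le_max_right _ _)
      (by rcases max_choice (a - j) 0 with h | h <;> simp [h, ha j])
      (fun ξ => mul_nonneg hC.le (mul_nonneg (by positivity) (hE0 ξ)))
      (fun t ξ h => by gcongr; exacts [hE0 t, hEmono t ξ h])
      (hderiv j hj) (hcont j hj) (hzero (j + 1) (by omega) hj)
    refine ⟨C' * C, by positivity, ?_⟩
    convert hKj' using 1
    · funext ξ; ring
    · rw [max_sub_one_max_zero]; push_cast; ring_nf

/-- Iterated antiderivatives remove the boundary singularity: if K = K 0 is analytic on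
the strip with blow-up rate (λ(π−λ))^{−m/2}, and K (j+1) are successive antiderivatives
vanishing at iπ/2, then for ℓ > m/2 the ℓ-th antiderivative satisfies a
polynomial-times-e^{c'ω(cosh ξ)} bound on the whole strip. -/
theorem stmt_17 (m ℓ : ℕ) (hℓ : (m : ℝ) / 2 < ℓ) (c c' : ℝ) (hc : 0 < c) (hc' : 0 < c')
    (ω : ℝ → ℝ) (hmono : Monotone ω)
    (K : ℕ → ℂ → ℂ)
    (hanal : DifferentiableOn ℂ (K 0) {ζ | 0 < ζ.im ∧ ζ.im < Real.pi})
    (hbound : ∀ ξ lam : ℝ, 0 < lam → lam < Real.pi →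
      ‖K 0 ((ξ : ℂ) + lam * Complex.I)‖ ≤
        c * Real.exp (c' * ω (Real.cosh ξ)) / (lam * (Real.pi - lam)) ^ ((m : ℝ) / 2))
    (hderiv : ∀ j < ℓ, ∀ ζ : ℂ, 0 < ζ.im → ζ.im < Real.pi →
      HasDerivAt (K (j + 1)) (K j ζ) ζ)
    (hzero : ∀ j, 1 ≤ j → j ≤ ℓ → K j ((Real.pi / 2 : ℝ) * Complex.I) = 0) :
    ∃ c'' > 0, ∀ ξ lam : ℝ, 0 < lam → lam < Real.pi →
      ‖K ℓ ((ξ : ℂ) + lam * Complex.I)‖ ≤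
        c'' * (1 + |ξ|) ^ ℓ * Real.exp (c' * ω (Real.cosh ξ)) := by
  -- the shift by `1 / 4` keeps every exponent `a - j` away from the logarithmic case `1`
  set a : ℝ := m / 2 + 1 / 4 with ha_def
  have ha : ∀ j : ℕ, a - j ≠ 1 := fun j h => by
    have : ((2 * m + 1 : ℕ) : ℝ) = (4 * j + 4 : ℕ) := by push_cast; linarith
    have : 2 * m + 1 = 4 * j + 4 := by exact_mod_cast this
    omega
  have ha_ℓ : a - ℓ ≤ 0 := by
    have : m + 1 ≤ 2 * ℓ := by exact_mod_cast (by linarith : (m : ℝ) < 2 * ℓ)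
    have : (m : ℝ) + 1 ≤ 2 * ℓ := by exact_mod_cast this
    linarith
  have hcont : ∀ j < ℓ, ∀ ζ : ℂ, 0 < ζ.im → ζ.im < π → ContinuousAt (K j) ζ
    | 0, _, ζ, h0, hπ => (hanal.differentiableAt <|
        (isOpen_Ioo.preimage Complex.continuous_im).mem_nhds ⟨h0, hπ⟩).continuousAt
    | j + 1, hj, ζ, h0, hπ => (hderiv j (by omega) ζ h0 hπ).continuousAt
  set E : ℝ → ℝ := fun ξ => (π ^ 2 / 4) ^ (a - m / 2) * (c * exp (c' * ω (cosh ξ)))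
  have hK0 : StripBound (K 0) E (max a 0) := by
    rw [max_eq_left (by positivity)]
    exact StripBound.mono_exponent hbound (fun ξ => by positivity) (by linarith)
  obtain ⟨C, hC, hK⟩ := StripBound.exists_iterate ha (fun ξ => by positivity)
    (fun t ξ h => by simp only [E]; gcongr; exact hmono (cosh_le_cosh.2 h))
    hderiv hcont hzero hK0 ℓ le_rfl
  refine ⟨C * ((π ^ 2 / 4) ^ (a - m / 2) * c), by positivity, fun ξ lam h0 hπ => ?_⟩
  have := hK ξ lam h0 hπ
  rw [max_eq_right ha_ℓ, rpow_zero, div_one] at this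
  exact this.trans_eq (by ring)
end
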